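/- Consider the program E₄ over atoms p(n), n ∈ ℕ, with rules: 'p(1) ← not p(0)', 'p(n+1) ← p(n)' for every n ≥ 1, and 'p(0) ← not (count{X:p(X)} > 0)'. Under the following reduct semantics w.r.t. a candidate S: (a) 'p(1) ← not p(0)' is deleted if p(0) ∈ S, else becomes the fact p(1); (b) the last rule is deleted if the set {n : p(n)∈S} is nonempty and finite (aggregate true), becomes the fact p(0) if {n : p(n)∈S} is infinite (aggregate undefined), and becomes the fact p(0) if the set is empty (aggregate false); (c) rules 'p(n+1) ← p(n)' are unchanged. S is an answer set iff S equals the least model of the reduct. Then E₄ has no answer set; in particular neither {p(0)} nor {p(n) : n ≥ 1} is an answer set. -/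

import Mathlib

/-- Models and least models of ground definite programs. -/
def IsModel {α : Type*} (P : Set (α × Set α)) (A : Set α) : Prop :=
  ∀ r ∈ P, r.2 ⊆ A → r.1 ∈ A

def IsLeastModel {α : Type*} (P : Set (α × Set α)) (A : Set α) : Prop :=
  IsModel P A ∧ ∀ M : Set α, IsModel P M → A ⊆ M

/-- Atoms: n represents p(n).  Reduct of the program E₄ w.r.t. S:
(a) `p(1) ← not p(0)` is deleted if p(0) ∈ S, else becomes the fact p(1);
(b) `p(0) ← not (count{X:p(X)} > 0)` is deleted iff {n : p(n) ∈ S} is nonempty and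
finite (aggregate true); if it is infinite (aggregate undefined) or empty
(aggregate false), the rule becomes the fact p(0);
(c) the rules `p(n+1) ← p(n)` for n ≥ 1 are unchanged. -/
def reduct (S : Set ℕ) : Set (ℕ × Set ℕ) :=
  {r | 0 ∉ S ∧ r = (1, (∅ : Set ℕ))} ∪
  {r | ∃ n : ℕ, 1 ≤ n ∧ r = (n + 1, {n})} ∪
  {r | ¬ (S.Nonempty ∧ S.Finite) ∧ r = (0, (∅ : Set ℕ))}

def AnswerSet (S : Set ℕ) : Prop := IsLeastModel (reduct S) S

/-!
Every answer set `S` contains `0`: otherwise the fact `p(1)` and the chain rules make `S`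
infinite, so the aggregate is undefined and `p(0)` becomes a fact. Once `0 ∈ S`, a finite `S`
leaves only the chain rules, of which `∅` is a model, while an infinite `S` leaves only the
fact `p(0)`, of which `{0}` is a model; either way minimality contradicts `0 ∈ S` or the
infiniteness of `S`.
-/

theorem isModel_reduct_iff (S A : Set ℕ) :
    IsModel (reduct S) A ↔
      (0 ∉ S → 1 ∈ A) ∧ (∀ n, 1 ≤ n → n ∈ A → n + 1 ∈ A) ∧
        (¬ (S.Nonempty ∧ S.Finite) → 0 ∈ A) := by
  constructor
  · intro hA
    refine ⟨fun h0 => ?_, fun n hn hnA => ?_, fun hS => ?_⟩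
    · exact hA _ (Or.inl (Or.inl ⟨h0, rfl⟩)) (Set.empty_subset A)
    · exact hA _ (Or.inl (Or.inr ⟨n, hn, rfl⟩)) (Set.singleton_subset_iff.mpr hnA)
    · exact hA _ (Or.inr ⟨hS, rfl⟩) (Set.empty_subset A)
  · rintro ⟨hfact, hstep, hzero⟩ r ((⟨h0, rfl⟩ | ⟨n, hn, rfl⟩) | ⟨hS, rfl⟩) hsub
    · exact hfact h0
    · exact hstep n hn (hsub rfl)
    · exact hzero hS

theorem Ici_one_subset_of_isModel_reduct {S A : Set ℕ} (h0 : 0 ∉ S)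
    (hA : IsModel (reduct S) A) : Set.Ici 1 ⊆ A := by
  obtain ⟨hfact, hstep, -⟩ := (isModel_reduct_iff S A).mp hA
  intro n hn
  induction n, hn using Nat.le_induction with
  | base => exact hfact h0
  | succ n hn ih => exact hstep n hn ih

theorem AnswerSet.zero_mem {S : Set ℕ} (hS : AnswerSet S) : 0 ∈ S := by
  by_contra h0
  have hinf : S.Infinite :=
    (Set.Ici_infinite 1).mono (Ici_one_subset_of_isModel_reduct h0 hS.1)
  exact h0 (((isModel_reduct_iff S S).mp hS.1).2.2 fun h => hinf h.2)

theorem AnswerSet.infinite {S : Set ℕ} (hS : AnswerSet S) : S.Infinite := by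
  intro hfin
  have h0 := hS.zero_mem
  have hempty : IsModel (reduct S) ∅ := (isModel_reduct_iff S ∅).mpr
    ⟨fun h => (h h0).elim, fun _ _ h => h.elim, fun h => (h ⟨⟨0, h0⟩, hfin⟩).elim⟩
  exact hS.2 ∅ hempty h0

theorem not_answerSet (S : Set ℕ) : ¬ AnswerSet S := by
  intro hS
  have h0 := hS.zero_mem
  have hzero : IsModel (reduct S) {0} := (isModel_reduct_iff S {0}).mpr
    ⟨fun h => (h h0).elim, fun n hn h => by cases h; omega, fun _ => rfl⟩
  exact hS.infinite ((Set.finite_singleton 0).subset (hS.2 {0} hzero))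

theorem E4_has_no_answer_set :
    (∀ S : Set ℕ, ¬ AnswerSet S) ∧
    ¬ AnswerSet {0} ∧ ¬ AnswerSet {n : ℕ | 1 ≤ n} :=
  ⟨not_answerSet, not_answerSet _, not_answerSet _⟩
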